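/- Let g ∈ ℓ², s₁ ≥ 0, s₂ ≤ 0, α > 0 and β > 0. Then the decomposition functional I(u,v) := ½|u|_{s₁}² + (α/2)‖u + v − g‖² + (β/2)|v|_{s₂}² has a unique minimizer (u,v) among pairs of sequences u, v ∈ ℓ² with |u|_{s₁} < ∞, and this minimizer is given explicitly by v_k = α g_k / (αβ|k|^{2(s₂−s₁)} + α + β|k|^{2s₂}) and u_k = (β|k|^{2s₂}/|k|^{2s₁}) v_k = αβ|k|^{2(s₂−s₁)} g_k / (αβ|k|^{2(s₂−s₁)} + α + β|k|^{2s₂}) for all k ∈ ℤ^d ∖ {0}. -/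

import Mathlib

/-!
The functional decouples over the frequencies: `I(u, v) = Σ_k e_k(u_k, v_k)` with the
one-mode energy `e(u, v) = ½ a|u|² + (α/2)|u + v − g|² + (β/2) b|v|²`, `a = |k|^{2s₁}`,
`b = |k|^{2s₂}`. Completing the square gives `e(u, v) = e(U, V) + e₀(u − U, v − V)`, where
`(U, V)` are the stated coefficients and `e₀` is the same energy with `g = 0`, a positive
definite quadratic form. Summing over `k` gives `I(u, v) = I(U, V) + Σ_k e₀(…) ≥ I(U, V)`, with
equality only if `u = U` and `v = V`. Since `|k| ≥ 1` and `s₂ ≤ 0` we have `b ≤ 1`, so every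
admissible pair has finite energy, and `|U|, |V| ≤ |g|`, `a|U|² = βb|V||U| ≤ β|g|²` show that
`(U, V)` is admissible.
-/

open scoped BigOperators
open Filter

noncomputable section

/-- Index set `ℤ^d \ {0}` of nonzero frequencies. -/
abbrev K (d : ℕ) : Type := {k : Fin d → ℤ // k ≠ 0}

/-- Euclidean norm `|k|` of a frequency `k ∈ ℤ^d \ {0}`. -/
noncomputable def nrm {d : ℕ} (k : K d) : ℝ := Real.sqrt (∑ i : Fin d, ((k.1 i : ℝ)) ^ 2)

/-- Squared fractional Sobolev seminorm `|u|_s² = Σ_k |k|^{2s} |u_k|²`. -/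
noncomputable def HnormSq {d : ℕ} (s : ℝ) (u : K d → ℂ) : ℝ :=
  ∑' k : K d, nrm k ^ (2 * s) * ‖u k‖ ^ 2

/-- `u ∈ ℓ²`, i.e. `‖u‖ = |u|_0 < ∞`. -/
def MemL2 {d : ℕ} (u : K d → ℂ) : Prop := Summable fun k : K d => ‖u k‖ ^ 2

/-- `|u|_s < ∞`. -/
def MemHs {d : ℕ} (s : ℝ) (u : K d → ℂ) : Prop :=
  Summable fun k : K d => nrm k ^ (2 * s) * ‖u k‖ ^ 2

section Mode

variable {a b α β : ℝ}

def modeEnergy (a b α β : ℝ) (g u v : ℂ) : ℝ :=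
  1 / 2 * (a * ‖u‖ ^ 2) + α / 2 * ‖u + v - g‖ ^ 2 + β / 2 * (b * ‖v‖ ^ 2)

def modeDenom (a b α β : ℝ) : ℝ := α * β * (b / a) + α + β * b

def modeMinU (a b α β : ℝ) (g : ℂ) : ℂ :=
  ((α * β * (b / a) : ℝ) : ℂ) * g / (modeDenom a b α β : ℂ)

def modeMinV (a b α β : ℝ) (g : ℂ) : ℂ := (α : ℂ) * g / (modeDenom a b α β : ℂ)

lemma modeDenom_pos (ha : 0 < a) (hb : 0 ≤ b) (hα : 0 < α) (hβ : 0 ≤ β) :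
    0 < modeDenom a b α β := by
  unfold modeDenom
  positivity

lemma modeMinU_eq (g : ℂ) :
    modeMinU a b α β g = ((β * b / a : ℝ) : ℂ) * modeMinV a b α β g := by
  simp only [modeMinU, modeMinV]
  push_cast
  ring

lemma modeEnergy_eq_add (ha : a ≠ 0) (hD : modeDenom a b α β ≠ 0) (g u v : ℂ) :
    modeEnergy a b α β g u v =
      modeEnergy a b α β g (modeMinU a b α β g) (modeMinV a b α β g) +
        modeEnergy a b α β 0 (u - modeMinU a b α β g) (v - modeMinV a b α β g) := by
  set p := α * β * (b / a) / modeDenom a b α β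
  set q := α / modeDenom a b α β
  -- `(p g, q g)` is the critical point: both partial derivatives of the energy vanish there.
  have hcrit_u : a * p + α * (p + q - 1) = 0 := by
    simp only [p, q]
    field_simp
    unfold modeDenom
    field_simp
    ring
  have hcrit_v : α * (p + q - 1) + β * b * q = 0 := by
    simp only [p, q]
    field_simp
    unfold modeDenom
    field_simp
    ring
  have hU : modeMinU a b α β g = (p : ℂ) * g := by
    rw [modeMinU, Complex.ofReal_div]; ring
  have hV : modeMinV a b α β g = (q : ℂ) * g := by
    rw [modeMinV, Complex.ofReal_div]; ring
  rw [hU, hV]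
  simp only [modeEnergy, Complex.sq_norm, Complex.normSq_apply, Complex.add_re, Complex.add_im,
    Complex.sub_re, Complex.sub_im, Complex.mul_re, Complex.mul_im, Complex.ofReal_re,
    Complex.ofReal_im, Complex.zero_re, Complex.zero_im]
  linear_combination ((u.re - p * g.re) * g.re + (u.im - p * g.im) * g.im) * hcrit_u +
    ((v.re - q * g.re) * g.re + (v.im - q * g.im) * g.im) * hcrit_v

lemma modeEnergy_nonneg (ha : 0 ≤ a) (hb : 0 ≤ b) (hα : 0 ≤ α) (hβ : 0 ≤ β) (g u v : ℂ) :
    0 ≤ modeEnergy a b α β g u v := by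
  unfold modeEnergy
  positivity

lemma eq_zero_of_modeEnergy_zero (ha : 0 < a) (hb : 0 < b) (hα : 0 ≤ α) (hβ : 0 < β)
    {u v : ℂ} (h : modeEnergy a b α β 0 u v = 0) : u = 0 ∧ v = 0 := by
  unfold modeEnergy at h
  rw [add_eq_zero_iff_of_nonneg (by positivity) (by positivity),
    add_eq_zero_iff_of_nonneg (by positivity) (by positivity)] at h
  obtain ⟨⟨hu, -⟩, hv⟩ := h
  simp_all [ha.ne', hb.ne', hβ.ne']

lemma norm_modeMinV_le (ha : 0 < a) (hb : 0 ≤ b) (hα : 0 < α) (hβ : 0 ≤ β) (g : ℂ) :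
    ‖modeMinV a b α β g‖ ≤ ‖g‖ := by
  have hD := modeDenom_pos ha hb hα hβ
  have hαD : α ≤ modeDenom a b α β := by
    have : 0 ≤ α * β * (b / a) + β * b := by positivity
    unfold modeDenom; linarith
  rw [modeMinV, norm_div, norm_mul, Complex.norm_of_nonneg hα.le,
    Complex.norm_of_nonneg hD.le, div_le_iff₀ hD, mul_comm]
  gcongr

lemma norm_modeMinU_le (ha : 0 < a) (hb : 0 ≤ b) (hα : 0 < α) (hβ : 0 ≤ β) (g : ℂ) :
    ‖modeMinU a b α β g‖ ≤ ‖g‖ := by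
  have hD := modeDenom_pos ha hb hα hβ
  have hc : 0 ≤ α * β * (b / a) := by positivity
  have hcD : α * β * (b / a) ≤ modeDenom a b α β := by
    have : 0 ≤ β * b := by positivity
    unfold modeDenom; linarith
  rw [modeMinU, norm_div, norm_mul, Complex.norm_of_nonneg hc,
    Complex.norm_of_nonneg hD.le, div_le_iff₀ hD, mul_comm]
  gcongr

lemma mul_sq_norm_modeMinU_le (ha : 0 < a) (hb : 0 ≤ b) (hb1 : b ≤ 1) (hα : 0 < α)
    (hβ : 0 ≤ β) (g : ℂ) : a * ‖modeMinU a b α β g‖ ^ 2 ≤ β * ‖g‖ ^ 2 := by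
  have hUV : a * ‖modeMinU a b α β g‖ = β * b * ‖modeMinV a b α β g‖ := by
    rw [modeMinU_eq, norm_mul, Complex.norm_of_nonneg (by positivity)]
    field_simp
  calc a * ‖modeMinU a b α β g‖ ^ 2
      = β * b * (‖modeMinV a b α β g‖ * ‖modeMinU a b α β g‖) := by rw [sq, ← mul_assoc, hUV]; ring
    _ ≤ β * 1 * (‖g‖ * ‖g‖) := by
      gcongr
      exacts [norm_modeMinV_le ha hb hα hβ g, norm_modeMinU_le ha hb hα hβ g]
    _ = β * ‖g‖ ^ 2 := by ring

end Mode

section Sequence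

variable {ι E : Type*} [SeminormedAddCommGroup E]

lemma summable_sq_norm_add {f h : ι → E} (hf : Summable fun i => ‖f i‖ ^ 2)
    (hh : Summable fun i => ‖h i‖ ^ 2) : Summable fun i => ‖f i + h i‖ ^ 2 :=
  ((hf.add hh).mul_left 2).of_nonneg_of_le (fun _ => sq_nonneg _) fun _ =>
    (pow_le_pow_left₀ (norm_nonneg _) (norm_add_le _ _) 2).trans add_sq_le

lemma summable_sq_norm_sub {f h : ι → E} (hf : Summable fun i => ‖f i‖ ^ 2)
    (hh : Summable fun i => ‖h i‖ ^ 2) : Summable fun i => ‖f i - h i‖ ^ 2 := by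
  simp_rw [sub_eq_add_neg]
  exact summable_sq_norm_add hf (by simpa only [norm_neg] using hh)

variable {a b : ι → ℝ} {α β : ℝ} {g u v : ι → ℂ}

lemma hasSum_modeEnergy (hb0 : ∀ i, 0 ≤ b i) (hb1 : ∀ i, b i ≤ 1)
    (hg : Summable fun i => ‖g i‖ ^ 2) (hu : Summable fun i => ‖u i‖ ^ 2)
    (hau : Summable fun i => a i * ‖u i‖ ^ 2) (hv : Summable fun i => ‖v i‖ ^ 2) :
    HasSum (fun i => modeEnergy (a i) (b i) α β (g i) (u i) (v i))
      (1 / 2 * ∑' i, a i * ‖u i‖ ^ 2 + α / 2 * ∑' i, ‖u i + v i - g i‖ ^ 2 +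
        β / 2 * ∑' i, b i * ‖v i‖ ^ 2) := by
  have hbv : Summable fun i => b i * ‖v i‖ ^ 2 :=
    hv.of_nonneg_of_le (fun i => mul_nonneg (hb0 i) (sq_nonneg _)) fun i =>
      mul_le_of_le_one_left (sq_nonneg _) (hb1 i)
  exact ((hau.hasSum.mul_left _).add
    ((summable_sq_norm_sub (summable_sq_norm_add hu hv) hg).hasSum.mul_left _)).add
      (hbv.hasSum.mul_left _)

lemma summable_sq_norm_modeMinU (ha : ∀ i, 0 < a i) (hb : ∀ i, 0 ≤ b i) (hα : 0 < α)
    (hβ : 0 ≤ β) (hg : Summable fun i => ‖g i‖ ^ 2) :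
    Summable fun i => ‖modeMinU (a i) (b i) α β (g i)‖ ^ 2 :=
  hg.of_nonneg_of_le (fun _ => sq_nonneg _) fun i =>
    pow_le_pow_left₀ (norm_nonneg _) (norm_modeMinU_le (ha i) (hb i) hα hβ _) 2

lemma summable_sq_norm_modeMinV (ha : ∀ i, 0 < a i) (hb : ∀ i, 0 ≤ b i) (hα : 0 < α)
    (hβ : 0 ≤ β) (hg : Summable fun i => ‖g i‖ ^ 2) :
    Summable fun i => ‖modeMinV (a i) (b i) α β (g i)‖ ^ 2 :=
  hg.of_nonneg_of_le (fun _ => sq_nonneg _) fun i =>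
    pow_le_pow_left₀ (norm_nonneg _) (norm_modeMinV_le (ha i) (hb i) hα hβ _) 2

lemma summable_mul_sq_norm_modeMinU (ha : ∀ i, 0 < a i) (hb : ∀ i, 0 ≤ b i)
    (hb1 : ∀ i, b i ≤ 1) (hα : 0 < α) (hβ : 0 ≤ β) (hg : Summable fun i => ‖g i‖ ^ 2) :
    Summable fun i => a i * ‖modeMinU (a i) (b i) α β (g i)‖ ^ 2 :=
  (hg.mul_left β).of_nonneg_of_le (fun i => mul_nonneg (ha i).le (sq_nonneg _)) fun i =>
    mul_sq_norm_modeMinU_le (ha i) (hb i) (hb1 i) hα hβ _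

lemma hasSum_modeEnergy_sub (ha : ∀ i, 0 < a i) (hb : ∀ i, 0 ≤ b i) (hb1 : ∀ i, b i ≤ 1)
    (hα : 0 < α) (hβ : 0 ≤ β) (hg : Summable fun i => ‖g i‖ ^ 2)
    (hu : Summable fun i => ‖u i‖ ^ 2) (hau : Summable fun i => a i * ‖u i‖ ^ 2)
    (hv : Summable fun i => ‖v i‖ ^ 2) :
    HasSum (fun i => modeEnergy (a i) (b i) α β 0 (u i - modeMinU (a i) (b i) α β (g i))
        (v i - modeMinV (a i) (b i) α β (g i)))
      (∑' i, modeEnergy (a i) (b i) α β (g i) (u i) (v i) -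
        ∑' i, modeEnergy (a i) (b i) α β (g i) (modeMinU (a i) (b i) α β (g i))
          (modeMinV (a i) (b i) α β (g i))) := by
  have hE := (hasSum_modeEnergy (α := α) (β := β) hb hb1 hg hu hau hv).summable
  have hEmin := (hasSum_modeEnergy (α := α) (β := β) hb hb1 hg
    (summable_sq_norm_modeMinU ha hb hα hβ hg)
    (summable_mul_sq_norm_modeMinU ha hb hb1 hα hβ hg)
    (summable_sq_norm_modeMinV ha hb hα hβ hg)).summable
  refine (hE.hasSum.sub hEmin.hasSum).congr_fun fun i => ?_
  rw [modeEnergy_eq_add (ha i).ne' (modeDenom_pos (ha i) (hb i) hα hβ).ne' (g i) (u i) (v i)]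
  ring

lemma tsum_modeEnergy_modeMin_le (ha : ∀ i, 0 < a i) (hb : ∀ i, 0 ≤ b i)
    (hb1 : ∀ i, b i ≤ 1) (hα : 0 < α) (hβ : 0 ≤ β) (hg : Summable fun i => ‖g i‖ ^ 2)
    (hu : Summable fun i => ‖u i‖ ^ 2) (hau : Summable fun i => a i * ‖u i‖ ^ 2)
    (hv : Summable fun i => ‖v i‖ ^ 2) :
    ∑' i, modeEnergy (a i) (b i) α β (g i) (modeMinU (a i) (b i) α β (g i))
        (modeMinV (a i) (b i) α β (g i)) ≤
      ∑' i, modeEnergy (a i) (b i) α β (g i) (u i) (v i) :=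
  sub_nonneg.mp <| (hasSum_modeEnergy_sub ha hb hb1 hα hβ hg hu hau hv).nonneg fun i =>
    modeEnergy_nonneg (ha i).le (hb i) hα.le hβ _ _ _

lemma eq_modeMin_of_tsum_modeEnergy_eq (ha : ∀ i, 0 < a i) (hb : ∀ i, 0 < b i)
    (hb1 : ∀ i, b i ≤ 1) (hα : 0 < α) (hβ : 0 < β) (hg : Summable fun i => ‖g i‖ ^ 2)
    (hu : Summable fun i => ‖u i‖ ^ 2) (hau : Summable fun i => a i * ‖u i‖ ^ 2)
    (hv : Summable fun i => ‖v i‖ ^ 2)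
    (heq : ∑' i, modeEnergy (a i) (b i) α β (g i) (u i) (v i) =
      ∑' i, modeEnergy (a i) (b i) α β (g i) (modeMinU (a i) (b i) α β (g i))
        (modeMinV (a i) (b i) α β (g i))) :
    u = (fun i => modeMinU (a i) (b i) α β (g i)) ∧
      v = fun i => modeMinV (a i) (b i) α β (g i) := by
  have hgap := hasSum_modeEnergy_sub ha (fun i => (hb i).le) hb1 hα hβ.le hg hu hau hv
  rw [heq, sub_self, hasSum_zero_iff_of_nonneg fun i =>
    modeEnergy_nonneg (ha i).le (hb i).le hα.le hβ.le _ _ _] at hgap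
  have hmode i := eq_zero_of_modeEnergy_zero (ha i) (hb i) hα.le hβ (congrFun hgap i)
  exact ⟨funext fun i => sub_eq_zero.mp (hmode i).1, funext fun i => sub_eq_zero.mp (hmode i).2⟩

end Sequence

lemma one_le_nrm {d : ℕ} (k : K d) : 1 ≤ nrm k := by
  obtain ⟨i, hi⟩ : ∃ i, k.1 i ≠ 0 := Function.ne_iff.mp k.2
  have hi1 : (1 : ℝ) ≤ (k.1 i : ℝ) ^ 2 :=
    mod_cast (one_le_sq_iff_one_le_abs _).mpr (Int.one_le_abs hi)
  rw [nrm, Real.one_le_sqrt]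
  exact hi1.trans (Finset.single_le_sum (fun j _ => sq_nonneg ((k.1 j : ℝ))) (Finset.mem_univ i))

theorem stmt_12_general (d : ℕ) (g : K d → ℂ) (hg : MemL2 g)
    (s₁ s₂ α β : ℝ) (hs₂ : s₂ ≤ 0) (hα : 0 < α) (hβ : 0 < β)
    (I : (K d → ℂ) → (K d → ℂ) → ℝ)
    (hI : ∀ u v : K d → ℂ, I u v =
      (1 / 2) * HnormSq s₁ u + (α / 2) * (∑' k : K d, ‖u k + v k - g k‖ ^ 2) +
        (β / 2) * HnormSq s₂ v)
    (ustar vstar : K d → ℂ)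
    (hv : ∀ k : K d, vstar k = (α : ℂ) * g k /
      ((α * β * nrm k ^ (2 * (s₂ - s₁)) + α + β * nrm k ^ (2 * s₂) : ℝ) : ℂ))
    (hu : ∀ k : K d, ustar k = ((α * β * nrm k ^ (2 * (s₂ - s₁)) : ℝ) : ℂ) * g k /
      ((α * β * nrm k ^ (2 * (s₂ - s₁)) + α + β * nrm k ^ (2 * s₂) : ℝ) : ℂ)) :
    MemL2 ustar ∧ MemHs s₁ ustar ∧ MemL2 vstar ∧
    (∀ k : K d, ustar k = ((β * nrm k ^ (2 * s₂) / nrm k ^ (2 * s₁) : ℝ) : ℂ) * vstar k) ∧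
    (∀ u v : K d → ℂ, MemL2 u → MemHs s₁ u → MemL2 v → I ustar vstar ≤ I u v) ∧
    (∀ u v : K d → ℂ, MemL2 u → MemHs s₁ u → MemL2 v →
      I u v = I ustar vstar → u = ustar ∧ v = vstar) := by
  set a : K d → ℝ := fun k => nrm k ^ (2 * s₁)
  set b : K d → ℝ := fun k => nrm k ^ (2 * s₂)
  have hnrm : ∀ k : K d, 0 < nrm k := fun k => one_pos.trans_le (one_le_nrm k)
  have ha : ∀ k, 0 < a k := fun k => Real.rpow_pos_of_pos (hnrm k) _
  have hb : ∀ k, 0 < b k := fun k => Real.rpow_pos_of_pos (hnrm k) _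
  have hb0 : ∀ k, 0 ≤ b k := fun k => (hb k).le
  have hb1 : ∀ k, b k ≤ 1 := fun k =>
    Real.rpow_le_one_of_one_le_of_nonpos (one_le_nrm k) (by linarith)
  have hba : ∀ k : K d, nrm k ^ (2 * (s₂ - s₁)) = b k / a k := fun k => by
    rw [mul_sub, Real.rpow_sub (hnrm k)]
  have hU : ustar = fun k => modeMinU (a k) (b k) α β (g k) :=
    funext fun k => by rw [hu, hba]; rfl
  have hV : vstar = fun k => modeMinV (a k) (b k) α β (g k) :=
    funext fun k => by rw [hv, hba]; rfl
  have hI_tsum : ∀ u v, MemL2 u → MemHs s₁ u → MemL2 v →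
      I u v = ∑' k, modeEnergy (a k) (b k) α β (g k) (u k) (v k) := fun u v hu hau hv =>
    (hI u v).trans (hasSum_modeEnergy hb0 hb1 hg hu hau hv).tsum_eq.symm
  have huL2 : MemL2 ustar := hU ▸ summable_sq_norm_modeMinU ha hb0 hα hβ.le hg
  have huHs : MemHs s₁ ustar := hU ▸ summable_mul_sq_norm_modeMinU ha hb0 hb1 hα hβ.le hg
  have hvL2 : MemL2 vstar := hV ▸ summable_sq_norm_modeMinV ha hb0 hα hβ.le hg
  refine ⟨huL2, huHs, hvL2, fun k => by rw [hU, hV]; exact modeMinU_eq _,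
    fun u v hu hau hv => ?_, fun u v hu hau hv heq => ?_⟩
  · rw [hI_tsum u v hu hau hv, hI_tsum _ _ huL2 huHs hvL2, hU, hV]
    exact tsum_modeEnergy_modeMin_le ha hb0 hb1 hα hβ.le hg hu hau hv
  · rw [hI_tsum u v hu hau hv, hI_tsum _ _ huL2 huHs hvL2, hU, hV] at heq
    rw [hU, hV]
    exact eq_modeMin_of_tsum_modeEnergy_eq ha hb hb1 hα hβ hg hu hau hv heq

/-- the decomposition functional
`I(u,v) = ½|u|_{s₁}² + (α/2)‖u+v−g‖² + (β/2)|v|_{s₂}²` has a unique minimizer among pairs of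
`ℓ²` sequences with `|u|_{s₁} < ∞`, given explicitly by the stated formulas. -/
theorem stmt_12 (d : ℕ) (hd : 1 ≤ d) (g : K d → ℂ) (hg : MemL2 g)
    (s₁ s₂ α β : ℝ) (hs₁ : 0 ≤ s₁) (hs₂ : s₂ ≤ 0) (hα : 0 < α) (hβ : 0 < β)
    (I : (K d → ℂ) → (K d → ℂ) → ℝ)
    (hI : ∀ u v : K d → ℂ, I u v =
      (1 / 2) * HnormSq s₁ u + (α / 2) * (∑' k : K d, ‖u k + v k - g k‖ ^ 2) +
        (β / 2) * HnormSq s₂ v)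
    (ustar vstar : K d → ℂ)
    (hv : ∀ k : K d, vstar k = (α : ℂ) * g k /
      ((α * β * nrm k ^ (2 * (s₂ - s₁)) + α + β * nrm k ^ (2 * s₂) : ℝ) : ℂ))
    (hu : ∀ k : K d, ustar k = ((α * β * nrm k ^ (2 * (s₂ - s₁)) : ℝ) : ℂ) * g k /
      ((α * β * nrm k ^ (2 * (s₂ - s₁)) + α + β * nrm k ^ (2 * s₂) : ℝ) : ℂ)) :
    MemL2 ustar ∧ MemHs s₁ ustar ∧ MemL2 vstar ∧
    (∀ k : K d, ustar k = ((β * nrm k ^ (2 * s₂) / nrm k ^ (2 * s₁) : ℝ) : ℂ) * vstar k) ∧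
    (∀ u v : K d → ℂ, MemL2 u → MemHs s₁ u → MemL2 v → I ustar vstar ≤ I u v) ∧
    (∀ u v : K d → ℂ, MemL2 u → MemHs s₁ u → MemL2 v →
      I u v = I ustar vstar → u = ustar ∧ v = vstar) :=
  stmt_12_general d g hg s₁ s₂ α β hs₂ hα hβ I hI ustar vstar hv hu
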